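/- arXiv:1208.1026 — 7 statements merged into one kernel-verified Lean document; each statement's English description precedes it below -/
import Mathlib

section
/- For every finite subset S ⊂ ℝ² and every ε > 0, there exists T > 0 such that for every t > T there is a rotation ρ of ℝ² about the origin with dist(ρ(t·z), ℤ²) < ε for all z ∈ S. -/
open Complex Metric

def intLattice (k : ℕ) : Set (EuclideanSpace ℝ (Fin k)) :=
  {v | ∀ i, ∃ n : ℤ, v i = (n : ℝ)}

noncomputable def rot (θ : ℝ) (v : EuclideanSpace ℝ (Fin 2)) : EuclideanSpace ℝ (Fin 2) :=
  WithLp.toLp 2 ![Real.cos θ * v 0 - Real.sin θ * v 1, Real.sin θ * v 0 + Real.cos θ * v 1]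

/-!
Identify ℝ² with ℂ and write `‖(x : UnitAddCircle)‖` for the distance from `x ∈ ℝ` to ℤ. The points
`z` and `-i z` (`z ∈ S`) lie in a free ℤ-module with a basis `W₁, …, Wₙ`, so the real and imaginary
parts of `t e^{iθ} z` are integer combinations of the numbers `Re (t e^{iθ} Wₖ)`, and it suffices to
make all of these close to ℤ at once.

To find such a `θ`, average the kernel `∏ₖ cos (π Re (t e^{iθ} Wₖ)) ^ (2M)` over the circle. By the
binomial theorem the kernel is a combination of the characters `exp (2πi Re (t e^{iθ} ∑ₖ μₖ Wₖ))`,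
`μ ∈ ℤⁿ`. By linear independence `∑ₖ μₖ Wₖ ≠ 0` for `μ ≠ 0`, and the average of such a character is
an integral `∫ exp (i R cos θ) dθ` with `R → ∞` as `t → ∞`, which tends to `0` by the
Riemann–Lebesgue lemma. So the average tends to the constant term
`(centralBinom M / 4 ^ M) ^ n ≥ (2M)⁻ⁿ`, which exceeds `cos (π δ) ^ (2M)` once `M` is large. Then at
some `θ` the kernel, and hence each of its factors, exceeds `cos (π δ) ^ (2M)`, which puts every
`Re (t e^{iθ} Wₖ)` within `δ` of ℤ.
-/

open Filter Topology Set MeasureTheory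
open scoped Real

theorem tendsto_setIntegral_exp_mul_cos :
    Tendsto (fun R : ℝ => ∫ θ in Ioo 0 π, cexp (↑(R * Real.cos θ) * I)) atTop (𝓝 0) := by
  set g : ℝ → ℂ := fun u => ((√(1 - u ^ 2))⁻¹ : ℝ)
  have hinj : InjOn Real.cos (Ioo 0 π) := Real.injOn_cos.mono Ioo_subset_Icc_self
  -- substituting `u = cos θ` turns the integral into a Fourier integral; the Riemann–Lebesgue lemma
  -- needs no integrability hypothesis, the integral of a non-integrable function being `0`
  have hfourier : ∀ R : ℝ, ∫ θ in Ioo 0 π, cexp (↑(R * Real.cos θ) * I) =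
      ∫ u, Real.fourierChar (-(u * (-R / (2 * π)))) • (Real.cos '' Ioo 0 π).indicator g u := by
    intro R
    simp_rw [← Set.indicator_smul_apply (Real.cos '' Ioo 0 π)
      (fun u => Real.fourierChar (-(u * (-R / (2 * π)))))]
    rw [integral_indicator (measurableSet_Ioo.image_of_continuousOn_injOn
      Real.continuous_cos.continuousOn hinj),
      integral_image_eq_integral_abs_deriv_smul measurableSet_Ioo
        (fun θ _ => (Real.hasDerivAt_cos θ).hasDerivWithinAt) hinj]
    refine setIntegral_congr_fun measurableSet_Ioo fun θ hθ => ?_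
    have hsin : 0 < Real.sin θ := Real.sin_pos_of_pos_of_lt_pi hθ.1 hθ.2
    simp only [g]
    rw [← Real.sin_eq_sqrt_one_sub_cos_sq hθ.1.le hθ.2.le, abs_neg, abs_of_pos hsin,
      Circle.smul_def, Real.fourierChar_apply]
    simp only [smul_eq_mul, Complex.real_smul]
    rw [mul_left_comm, ← ofReal_mul, mul_inv_cancel₀ hsin.ne', ofReal_one, mul_one]
    congr 2
    field_simp
  simp_rw [hfourier]
  exact (Real.tendsto_integral_exp_smul_cocompact _).comp <|
    (tendsto_neg_atTop_atBot.atBot_div_const (by positivity)).mono_right atBot_le_cocompact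

theorem re_ofReal_mul_exp_mul (t θ : ℝ) (V : ℂ) :
    (t * cexp (θ * I) * V).re = t * ‖V‖ * Real.cos (θ + arg V) := by
  conv_lhs => rw [← norm_mul_exp_arg_mul_I V]
  rw [mul_mul_mul_comm, ← Complex.exp_add, ← add_mul, ← ofReal_add, ← ofReal_mul,
    re_ofReal_mul, exp_ofReal_mul_I_re, mul_comm (t : ℝ)]

theorem intervalIntegral_exp_mul_cos_add (R φ : ℝ) :
    ∫ θ in (0)..(2 * π), cexp (↑(R * Real.cos (θ + φ)) * I) =
      2 * ∫ θ in Ioo 0 π, cexp (↑(R * Real.cos θ) * I) := by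
  set F : ℝ → ℂ := fun θ => cexp (↑(R * Real.cos θ) * I)
  have hF : Continuous F := by fun_prop
  have hper : Function.Periodic F (2 * π) := fun θ => by simp only [F, Real.cos_add_two_pi]
  calc ∫ θ in (0)..(2 * π), F (θ + φ)
      = ∫ θ in (-π)..(-π + 2 * π), F θ := by
        rw [intervalIntegral.integral_comp_add_right, zero_add, add_comm,
          hper.intervalIntegral_add_eq φ (-π)]
    _ = (∫ θ in (0)..π, F (-θ)) + ∫ θ in (0)..π, F θ := by
        rw [intervalIntegral.integral_comp_neg, neg_zero, show -π + 2 * π = π by ring,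
          intervalIntegral.integral_add_adjacent_intervals (hF.intervalIntegrable _ _)
            (hF.intervalIntegrable _ _)]
    _ = 2 * ∫ θ in Ioo 0 π, F θ := by
        simp only [F, Real.cos_neg]
        rw [intervalIntegral.integral_of_le Real.pi_pos.le, integral_Ioc_eq_integral_Ioo]
        ring

theorem tendsto_intervalIntegral_exp_re_mul (V : ℂ) :
    Tendsto (fun t : ℝ => ∫ θ in (0)..(2 * π), cexp (↑(2 * π * (t * cexp (θ * I) * V).re) * I))
      atTop (𝓝 (if V = 0 then ((2 * π : ℝ) : ℂ) else 0)) := by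
  split_ifs with hV
  · simp [hV]
  have hR : Tendsto (fun t : ℝ => 2 * π * ‖V‖ * t) atTop atTop :=
    tendsto_id.const_mul_atTop (by positivity)
  have h := (tendsto_setIntegral_exp_mul_cos.comp hR).const_mul 2
  rw [mul_zero] at h
  refine h.congr fun t => ?_
  simp only [Function.comp_apply, re_ofReal_mul_exp_mul,
    ← intervalIntegral_exp_mul_cos_add _ (arg V)]
  congr! 5
  ring

section TrigonometricPolynomial

variable {ι : Type*} [Fintype ι] [DecidableEq ι]

theorem prod_sum_exp_re_mul (W : ι → ℂ) (s : Finset ℤ) (c : ℤ → ℂ) (z : ℂ) :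
    ∏ k, ∑ m ∈ s, c m * cexp (↑(2 * π * (m * (z * W k).re)) * I) =
      ∑ μ ∈ Fintype.piFinset fun _ => s, (∏ k, c (μ k)) *
        cexp (↑(2 * π * (z * ∑ k, μ k • W k).re) * I) := by
  rw [Finset.prod_univ_sum]
  refine Finset.sum_congr rfl fun μ _ => ?_
  rw [Finset.prod_mul_distrib, ← Complex.exp_sum, Finset.mul_sum, re_sum, Finset.mul_sum,
    ofReal_sum, Finset.sum_mul]
  congr! 4 with k
  rw [mul_smul_comm, smul_re, zsmul_eq_mul]

theorem tendsto_intervalIntegral_prod_sum_exp {W : ι → ℂ} (hW : LinearIndependent ℤ W)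
    (s : Finset ℤ) (hs : 0 ∈ s) (c : ℤ → ℂ) :
    Tendsto (fun t : ℝ => ∫ θ in (0)..(2 * π),
        ∏ k, ∑ m ∈ s, c m * cexp (↑(2 * π * (m * (t * cexp (θ * I) * W k).re)) * I))
      atTop (𝓝 (2 * π * c 0 ^ Fintype.card ι)) := by
  have hV : ∀ μ : ι → ℤ, ∑ k, μ k • W k = 0 ↔ μ = 0 := fun μ =>
    ⟨fun h => funext (Fintype.linearIndependent_iff.mp hW μ h), fun h => by simp [h]⟩
  simp_rw [prod_sum_exp_re_mul]
  have hlim := tendsto_finsetSum (Fintype.piFinset fun _ : ι => s) fun μ _ =>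
    (tendsto_intervalIntegral_exp_re_mul (∑ k, μ k • W k)).const_mul (∏ k, c (μ k))
  simp only [hV, mul_ite, mul_zero, Finset.sum_ite_eq', Fintype.mem_piFinset, hs, implies_true,
    if_true, Pi.zero_apply, Finset.prod_const, Finset.card_univ] at hlim
  convert hlim using 2 with t
  · rw [intervalIntegral.integral_finsetSum fun μ _ =>
      (by fun_prop : Continuous _).intervalIntegrable _ _]
    simp only [intervalIntegral.integral_const_mul]
  · push_cast
    ring

end TrigonometricPolynomial

theorem cos_pi_mul_pow_eq_sum (M : ℕ) (x : ℝ) :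
    ((Real.cos (π * x) ^ (2 * M) : ℝ) : ℂ) = ∑ m ∈ Finset.Icc (-(M : ℤ)) M,
      ((2 * M).choose (m + M).toNat / 4 ^ M : ℂ) * cexp (↑(2 * π * (m * x)) * I) := by
  have hcos : ((Real.cos (π * x) : ℝ) : ℂ) =
      (cexp (↑(π * x) * I) + cexp (-(↑(π * x) * I))) / 2 := by
    rw [ofReal_cos, Complex.cos]; ring_nf
  rw [ofReal_pow, hcos, div_pow, add_pow, Finset.sum_div]
  refine Finset.sum_nbij' (fun j => (j : ℤ) - M) (fun m => (m + M).toNat) ?_ ?_ ?_ ?_ ?_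
  · intro j hj; simp only [Finset.mem_range, Finset.mem_Icc] at hj ⊢; omega
  · intro m hm; simp only [Finset.mem_range, Finset.mem_Icc] at hm ⊢; omega
  · intro j _; simp
  · intro m hm; simp only [Finset.mem_Icc] at hm; simp; omega
  · intro j hj
    simp only [Finset.mem_range] at hj
    rw [sub_add_cancel, Int.toNat_natCast, ← Complex.exp_nat_mul, ← Complex.exp_nat_mul,
      ← Complex.exp_add, pow_mul, Nat.cast_sub (by omega : j ≤ 2 * M), show (2 : ℂ) ^ 2 = 4 by norm_num,
      mul_comm (cexp _), mul_div_right_comm]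
    congr 2
    push_cast
    ring

theorem exists_pow_lt_centralBinom_div_pow {r : ℝ} (hr : |r| < 1) (n : ℕ) :
    ∃ M : ℕ, r ^ M < ((M.centralBinom : ℝ) / 4 ^ M) ^ n := by
  have h := (tendsto_pow_const_mul_const_pow_of_abs_lt_one n hr).const_mul (2 ^ n)
  rw [mul_zero] at h
  obtain ⟨M, hM, hM0⟩ := ((h.eventually (gt_mem_nhds one_pos)).and (eventually_gt_atTop 0)).exists
  have hcb : 1 / (2 * M) ≤ (M.centralBinom : ℝ) / 4 ^ M := by
    rw [div_le_div_iff₀ (by positivity) (by positivity), one_mul, mul_comm]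
    exact_mod_cast Nat.four_pow_le_two_mul_self_mul_centralBinom M hM0
  refine ⟨M, ?_⟩
  calc r ^ M < 1 / (2 * M) ^ n := by
        rw [lt_div_iff₀ (by positivity), mul_pow]; linarith
    _ = (1 / (2 * M)) ^ n := by rw [div_pow, one_pow]
    _ ≤ _ := pow_le_pow_left₀ (by positivity) hcb n

theorem UnitAddCircle.norm_coe_lt_of_cos_sq_lt {x δ : ℝ} (hδ : 0 ≤ δ)
    (h : Real.cos (π * δ) ^ 2 < Real.cos (π * x) ^ 2) : ‖(x : UnitAddCircle)‖ < δ := by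
  rw [UnitAddCircle.norm_eq]
  by_contra! hle
  have hd : |x - round x| ≤ 1 / 2 := abs_sub_round x
  have hsq : ∀ y : ℝ, Real.cos (π * y) ^ 2 = 1 / 2 + Real.cos (2 * π * y) / 2 := fun y => by
    rw [Real.cos_sq]; ring_nf
  have hcos : Real.cos (π * x) ^ 2 = Real.cos (π * |x - round x|) ^ 2 := by
    rw [hsq, hsq, show 2 * π * |x - round x| = |2 * π * (x - round x)| by
      rw [abs_mul, abs_of_pos Real.two_pi_pos], Real.cos_abs,
      show 2 * π * (x - round x) = 2 * π * x - (round x : ℤ) * (2 * π) by ring,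
      Real.cos_sub_int_mul_two_pi]
  have hmono : Real.cos (π * |x - round x|) ≤ Real.cos (π * δ) :=
    Real.cos_le_cos_of_nonneg_of_le_pi (by positivity) (by nlinarith [Real.pi_pos])
      (by nlinarith [Real.pi_pos])
  have hnonneg : 0 ≤ Real.cos (π * |x - round x|) :=
    Real.cos_nonneg_of_neg_pi_div_two_le_of_le (by nlinarith [Real.pi_pos, abs_nonneg (x - round x)])
      (by nlinarith [Real.pi_pos])
  nlinarith [pow_le_pow_left₀ hnonneg hmono 2]

theorem eventually_exists_forall_norm_coe_re_lt {ι : Type*} [Fintype ι] {W : ι → ℂ}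
    (hW : LinearIndependent ℤ W) {δ : ℝ} (hδ : 0 < δ) :
    ∀ᶠ t : ℝ in atTop, ∃ θ : ℝ, ∀ k, ‖((t * cexp (θ * I) * W k).re : UnitAddCircle)‖ < δ := by
  classical
  wlog hδ2 : δ ≤ 1 / 2 generalizing δ
  · filter_upwards [this one_half_pos le_rfl] with t ⟨θ, hθ⟩
    exact ⟨θ, fun k => (hθ k).trans (by linarith)⟩
  set r := Real.cos (π * δ) ^ 2
  have hr1 : r < 1 := by
    have := Real.sin_pos_of_pos_of_lt_pi (by positivity : 0 < π * δ) (by nlinarith [Real.pi_pos])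
    nlinarith [Real.sin_sq_add_cos_sq (π * δ)]
  obtain ⟨M, hM⟩ := exists_pow_lt_centralBinom_div_pow
    (by rwa [abs_of_nonneg (sq_nonneg _)]) (Fintype.card ι)
  set K : ℝ → ℝ → ℝ := fun t θ => ∏ k, (Real.cos (π * (t * cexp (θ * I) * W k).re) ^ 2) ^ M
  have hK : ∀ t, Continuous (K t) := fun t => by fun_prop
  have hlim : Tendsto (fun t => ∫ θ in (0)..(2 * π), K t θ) atTop
      (𝓝 (2 * π * ((M.centralBinom : ℝ) / 4 ^ M) ^ Fintype.card ι)) := by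
    have h := tendsto_intervalIntegral_prod_sum_exp hW (Finset.Icc (-(M : ℤ)) M) (by simp)
      fun m => ((2 * M).choose (m + M).toNat / 4 ^ M : ℂ)
    rw [← tendsto_ofReal_iff]
    convert h using 2 with t
    · rw [← intervalIntegral.integral_ofReal]
      simp only [K, ofReal_prod, ← pow_mul, cos_pi_mul_pow_eq_sum]
    · simp [Nat.centralBinom_eq_two_mul_choose]
  filter_upwards [hlim.eventually (lt_mem_nhds (by gcongr : 2 * π * r ^ M < _))] with t ht
  obtain ⟨θ, hθ⟩ : ∃ θ, r ^ M < K t θ := by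
    by_contra! h
    have := intervalIntegral.integral_mono_on (μ := volume) Real.two_pi_pos.le
      ((hK t).intervalIntegrable _ _) intervalIntegrable_const fun θ _ => h θ
    rw [intervalIntegral.integral_const, smul_eq_mul, sub_zero] at this
    linarith
  refine ⟨θ, fun k => UnitAddCircle.norm_coe_lt_of_cos_sq_lt hδ.le ?_⟩
  refine lt_of_pow_lt_pow_left₀ M (sq_nonneg _) (hθ.trans_le ?_)
  calc K t θ ≤ ∏ i ∈ {k}, (Real.cos (π * (t * cexp (θ * I) * W i).re) ^ 2) ^ M :=
        Finset.prod_le_prod_of_subset_of_le_one (by simp) (fun i _ => by positivity)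
          fun i _ _ => pow_le_one₀ (sq_nonneg _) (Real.cos_sq_le_one _)
    _ = _ := Finset.prod_singleton _ _

theorem exists_linearIndependent_subset_span {R M : Type*} [CommRing R] [IsDomain R]
    [IsPrincipalIdealRing R] [AddCommGroup M] [Module R M] [Module.IsTorsionFree R M] {s : Set M}
    (hs : s.Finite) :
    ∃ (n : ℕ) (W : Fin n → M), LinearIndependent R W ∧ s ⊆ Submodule.span R (range W) := by
  have : Module.Finite R (Submodule.span R s) := Module.Finite.span_of_finite R hs
  let b := Module.finBasis R (Submodule.span R s)
  refine ⟨_, (Submodule.span R s).subtype ∘ b,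
    b.linearIndependent.map' _ (Submodule.ker_subtype _), ?_⟩
  rw [range_comp, Submodule.span_image, b.span_eq, Submodule.map_subtype_top]
  exact Submodule.subset_span

theorem eventually_norm_coe_re_mul_lt_of_mem_span {ι : Type*} [Fintype ι] {W : ι → ℂ} {u : ℂ}
    (hu : u ∈ Submodule.span ℤ (range W)) :
    ∀ᶠ C : ℝ in atTop, ∀ (z : ℂ) (δ : ℝ), 0 < δ →
      (∀ k, ‖((z * W k).re : UnitAddCircle)‖ < δ) → ‖((z * u).re : UnitAddCircle)‖ < C * δ := by
  obtain ⟨a, rfl⟩ := (Submodule.mem_span_range_iff_exists_fun ℤ).1 hu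
  filter_upwards [eventually_gt_atTop (∑ k, |(a k : ℝ)|)] with C hC z δ hδ hW
  calc ‖((z * ∑ k, a k • W k).re : UnitAddCircle)‖
      = ‖∑ k, a k • ((z * W k).re : UnitAddCircle)‖ := by
        simp only [Finset.mul_sum, re_sum, mul_smul_comm, smul_re, ← AddCircle.coe_zsmul]
        exact congrArg norm (map_sum (QuotientAddGroup.mk' (AddSubgroup.zmultiples (1 : ℝ))) _ _)
    _ ≤ ∑ k, |(a k : ℝ)| * δ := by
        refine (norm_sum_le _ _).trans (Finset.sum_le_sum fun k _ => (norm_zsmul_le _ _).trans ?_)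
        rw [Int.norm_eq_abs]
        exact mul_le_mul_of_nonneg_left (hW k).le (abs_nonneg _)
    _ = (∑ k, |(a k : ℝ)|) * δ := (Finset.sum_mul ..).symm
    _ < C * δ := mul_lt_mul_of_pos_right hC hδ

theorem infDist_intLattice_le {k : ℕ} (v : EuclideanSpace ℝ (Fin k)) :
    infDist v (intLattice k) ≤ ∑ i, ‖(v i : UnitAddCircle)‖ := by
  set w : EuclideanSpace ℝ (Fin k) := WithLp.toLp 2 fun i => (round (v i) : ℝ)
  have hw : w ∈ intLattice k := fun i => ⟨round (v i), rfl⟩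
  calc infDist v (intLattice k) ≤ dist v w := infDist_le_dist_of_mem hw
    _ = √(∑ i, |v i - round (v i)| ^ 2) := by simp [EuclideanSpace.dist_eq, Real.dist_eq, w]
    _ ≤ ∑ i, |v i - round (v i)| := Real.sqrt_le_iff.2
        ⟨by positivity, Finset.sum_sq_le_sq_sum_of_nonneg fun i _ => abs_nonneg _⟩
    _ = _ := by simp [UnitAddCircle.norm_eq]

theorem rot_smul_apply_zero (θ t : ℝ) (z : EuclideanSpace ℝ (Fin 2)) :
    rot θ (t • z) 0 = (t * cexp (θ * I) * ⟨z 0, z 1⟩).re := by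
  simp [rot, mul_re, exp_ofReal_mul_I_re, exp_ofReal_mul_I_im]
  ring

theorem rot_smul_apply_one (θ t : ℝ) (z : EuclideanSpace ℝ (Fin 2)) :
    rot θ (t • z) 1 = (t * cexp (θ * I) * (-I * ⟨z 0, z 1⟩)).re := by
  simp [rot, mul_re, exp_ofReal_mul_I_re, exp_ofReal_mul_I_im]
  ring

theorem stmt_0 (S : Finset (EuclideanSpace ℝ (Fin 2))) (ε : ℝ) (hε : 0 < ε) :
    ∃ T > (0 : ℝ), ∀ t > T, ∃ θ : ℝ,
      ∀ z ∈ S, Metric.infDist (rot θ (t • z)) (intLattice 2) < ε := by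
  classical
  set F : Finset ℂ := S.image (fun z => ⟨z 0, z 1⟩) ∪ S.image (fun z => -I * ⟨z 0, z 1⟩)
  obtain ⟨n, W, hW, hF⟩ := exists_linearIndependent_subset_span (R := ℤ) F.finite_toSet
  obtain ⟨C, hC, hC0⟩ := (((eventually_all_finset F).2 fun u hu =>
    eventually_norm_coe_re_mul_lt_of_mem_span (hF hu)).and (eventually_gt_atTop 0)).exists
  obtain ⟨T, hT⟩ := eventually_atTop.1
    (eventually_exists_forall_norm_coe_re_lt hW (δ := ε / (2 * C)) (by positivity))
  refine ⟨max T 1, by positivity, fun t ht => ?_⟩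
  obtain ⟨θ, hθ⟩ := hT t ((le_max_left _ _).trans ht.le)
  have hF_near : ∀ u ∈ F, ‖((t * cexp (θ * I) * u).re : UnitAddCircle)‖ < ε / 2 := fun u hu => by
    convert hC u hu _ _ (by positivity) hθ using 1
    field_simp
  refine ⟨θ, fun z hz => ?_⟩
  calc infDist (rot θ (t • z)) (intLattice 2)
      ≤ ∑ i, ‖(rot θ (t • z) i : UnitAddCircle)‖ := infDist_intLattice_le _
    _ < ε / 2 + ε / 2 := by
        rw [Fin.sum_univ_two, rot_smul_apply_zero, rot_smul_apply_one]
        exact add_lt_add (hF_near _ (Finset.mem_union_left _ (Finset.mem_image_of_mem _ hz)))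
          (hF_near _ (Finset.mem_union_right _ (Finset.mem_image_of_mem _ hz)))
    _ = ε := add_halves ε
end

section
/- For every t > 0 and every isometric embedding f of the three-point set {A=(0,0), B=(0,t), C=(t+1/2, 0)} ⊂ ℝ² into ℝ², one has max(dist(f(A),ℤ²), dist(f(B),ℤ²), dist(f(C),ℤ²)) ≥ 1/8. -/
/-!
Identify `ℝ²` with `ℂ` and `ℤ²` with `ℤ[i]`, and put `u = f C - f A`, `v = f B - f A`. The right
angle at `f A` gives `(t + 1/2) v = ε t u` with `ε = ±i`. If `f A, f B, f C` were within `1/8` of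
Gaussian integers `p, q, r`, then `g = (r - p) + ε (q - p) ∈ ℤ[i]` would satisfy
`‖(2t + 1) g - u‖ < (2t + 1) / 2`: the exact parts cancel and each of the two error terms is
below `1/4`. But `u / (2t + 1)` has norm `1/2`, and no Gaussian integer is closer than `1/2` to a
point of norm `1/2`.
-/

open Metric

open Complex ComplexConjugate

namespace GaussianInt

theorem one_le_norm_of_mem_range_toComplex {z : ℂ} (hz : z ∈ toComplex.range) (h0 : z ≠ 0) :
    1 ≤ ‖z‖ := by
  obtain ⟨x, rfl⟩ := hz
  have hx : x ≠ 0 := fun h => h0 (by simp [h])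
  have hnorm : (1 : ℝ) ≤ ‖toComplex x‖ ^ 2 := by
    rw [← Complex.normSq_eq_norm_sq, ← intCast_real_norm]
    exact_mod_cast norm_pos.2 hx
  nlinarith [_root_.norm_nonneg (toComplex x)]

theorem half_le_norm_mul_sub {c : ℝ} {g u : ℂ} (hg : g ∈ toComplex.range) (hu : ‖u‖ = c / 2) :
    c / 2 ≤ ‖c * g - u‖ := by
  rcases eq_or_ne g 0 with rfl | hg0
  · simp [hu]
  have hc : 0 ≤ c := by linarith [_root_.norm_nonneg u]
  calc c / 2 = c * 1 - ‖u‖ := by rw [hu]; ring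
    _ ≤ c * ‖g‖ - ‖u‖ := by gcongr; exact one_le_norm_of_mem_range_toComplex hg hg0
    _ = ‖(c : ℂ) * g‖ - ‖u‖ := by rw [norm_mul, Complex.norm_real, Real.norm_of_nonneg hc]
    _ ≤ ‖c * g - u‖ := norm_sub_norm_le _ _

theorem orthonormalBasisOneI_repr_symm_mem_range {x : EuclideanSpace ℝ (Fin 2)}
    (hx : x ∈ intLattice 2) : orthonormalBasisOneI.repr.symm x ∈ toComplex.range := by
  obtain ⟨m, hm⟩ := hx 0
  obtain ⟨n, hn⟩ := hx 1
  exact ⟨⟨m, n⟩, by simp [toComplex_def', orthonormalBasisOneI_repr_symm_apply, hm, hn]⟩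

end GaussianInt

theorem Complex.exists_norm_mul_eq_of_inner_eq_zero {u v : ℂ} (h : inner ℝ u v = 0) :
    ∃ ε : ℂ, (ε = I ∨ ε = -I) ∧ (‖u‖ : ℂ) * v = ε * ‖v‖ * u := by
  rw [Complex.inner] at h
  set w := v * conj u with hw
  have hw_im : w = w.im * I := Complex.ext (by simp [h]) (by simp)
  have habs : |w.im| = ‖u‖ * ‖v‖ := by
    have : ‖w‖ = |w.im| := by rw [hw_im]; simp
    rw [← this, hw, norm_mul, norm_conj, mul_comm]
  have hsq : (‖u‖ : ℂ) * (‖u‖ * v) = u * w := by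
    rw [hw, ← mul_assoc, ← mul_assoc, mul_comm u v, mul_assoc v, mul_conj, normSq_eq_norm_sq]
    push_cast; ring
  rcases eq_or_ne u 0 with rfl | hu
  · exact ⟨I, Or.inl rfl, by simp⟩
  have hu' : (‖u‖ : ℂ) ≠ 0 := by simpa using hu
  rcases abs_eq (by positivity) |>.1 habs with him | him
  · refine ⟨I, Or.inl rfl, mul_left_cancel₀ hu' ?_⟩
    rw [hsq, hw_im, him]; push_cast; ring
  · refine ⟨-I, Or.inr rfl, mul_left_cancel₀ hu' ?_⟩
    rw [hsq, hw_im, him]; push_cast; ring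

theorem not_near_gaussianInt_of_right_triangle {t : ℝ} {a b c p q r : ℂ}
    (hp : p ∈ GaussianInt.toComplex.range) (hq : q ∈ GaussianInt.toComplex.range)
    (hr : r ∈ GaussianInt.toComplex.range)
    (hab : dist a b = t) (hac : dist a c = t + 1 / 2)
    (hbc : dist b c ^ 2 = dist a b ^ 2 + dist a c ^ 2) :
    ¬ (dist a p < 1 / 8 ∧ dist b q < 1 / 8 ∧ dist c r < 1 / 8) := by
  rintro ⟨hap, hbq, hcr⟩
  have hu : ‖c - a‖ = t + 1 / 2 := by rw [← dist_eq_norm, dist_comm, hac]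
  have hv : ‖b - a‖ = t := by rw [← dist_eq_norm, dist_comm, hab]
  have hperp : inner ℝ (c - a) (b - a) = 0 := by
    refine (norm_sub_sq_eq_norm_sq_add_norm_sq_iff_real_inner_eq_zero _ _).1 ?_
    rw [sub_sub_sub_cancel_right, ← dist_eq_norm', hu, hv]
    rw [hab, hac] at hbc
    linear_combination hbc
  obtain ⟨ε, hε, hrot⟩ := Complex.exists_norm_mul_eq_of_inner_eq_zero hperp
  rw [hu, hv] at hrot
  have hε_sq : ε ^ 2 = -1 := by rcases hε with rfl | rfl <;> simp
  have hε_norm : ‖ε‖ = 1 := by rcases hε with rfl | rfl <;> simp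
  have hε_mem : ε ∈ GaussianInt.toComplex.range := by
    have hI : I ∈ GaussianInt.toComplex.range := ⟨⟨0, 1⟩, by simp [GaussianInt.toComplex_def']⟩
    rcases hε with rfl | rfl
    exacts [hI, neg_mem hI]
  set g := (r - p) + ε * (q - p)
  have hg : g ∈ GaussianInt.toComplex.range :=
    add_mem (sub_mem hr hp) (mul_mem hε_mem (sub_mem hq hp))
  -- rotating the leg `b - a` onto `c - a` cancels the exact parts of `r - p` and `q - p`
  have hkey : ((2 * t + 1 : ℝ) : ℂ) * g - (c - a)
      = (2 * t + 1 : ℝ) * ((r - c) - (p - a) + ε * ((q - b) - (p - a))) := by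
    push_cast at hrot ⊢
    linear_combination (2 * ε) * hrot + 2 * t * (c - a) * hε_sq
  have ht : 0 < 2 * t + 1 := by linarith [dist_nonneg (x := a) (y := b)]
  have hsmall : ‖((2 * t + 1 : ℝ) : ℂ) * g - (c - a)‖ < (2 * t + 1) / 2 := by
    rw [hkey, norm_mul, Complex.norm_real, Real.norm_of_nonneg ht.le]
    rw [dist_eq_norm'] at hap hbq hcr
    calc (2 * t + 1) * ‖r - c - (p - a) + ε * (q - b - (p - a))‖
        ≤ (2 * t + 1) * (‖r - c‖ + ‖p - a‖ + ‖ε‖ * (‖q - b‖ + ‖p - a‖)) := by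
          gcongr
          refine (norm_add_le _ _).trans (add_le_add (norm_sub_le _ _) ?_)
          rw [norm_mul]
          gcongr
          exact norm_sub_le _ _
      _ < (2 * t + 1) * (1 / 2) := by
          gcongr
          rw [hε_norm]
          linarith
      _ = (2 * t + 1) / 2 := by ring
  exact (GaussianInt.half_le_norm_mul_sub hg (by rw [hu]; ring)).not_gt hsmall

theorem stmt_3 (t : ℝ) (ht : 0 < t)
    (A B C : EuclideanSpace ℝ (Fin 2))
    (hA : A = !₂[0, 0]) (hB : B = !₂[0, t]) (hC : C = !₂[t + 1/2, 0])
    (f : EuclideanSpace ℝ (Fin 2) → EuclideanSpace ℝ (Fin 2))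
    (hAB : dist (f A) (f B) = dist A B)
    (hAC : dist (f A) (f C) = dist A C)
    (hBC : dist (f B) (f C) = dist B C) :
    1/8 ≤ max (Metric.infDist (f A) (intLattice 2))
          (max (Metric.infDist (f B) (intLattice 2))
               (Metric.infDist (f C) (intLattice 2))) := by
  have hdAB : dist A B = t := by
    rw [← sq_eq_sq₀ dist_nonneg ht.le, hA, hB, EuclideanSpace.dist_sq_eq]
    simp [Fin.sum_univ_two]
  have hdAC : dist A C = t + 1 / 2 := by
    rw [← sq_eq_sq₀ dist_nonneg (by positivity), hA, hC, EuclideanSpace.dist_sq_eq]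
    simp [Fin.sum_univ_two]
  have hdBC : dist B C ^ 2 = dist A B ^ 2 + dist A C ^ 2 := by
    rw [hdAB, hdAC, hB, hC, EuclideanSpace.dist_sq_eq]; simp [Fin.sum_univ_two]; ring
  have hL : (intLattice 2).Nonempty := ⟨0, fun _ => ⟨0, by simp⟩⟩
  by_contra! hfar
  simp only [max_lt_iff] at hfar
  obtain ⟨p, hp, hAp⟩ := (infDist_lt_iff hL).1 hfar.1
  obtain ⟨q, hq, hBq⟩ := (infDist_lt_iff hL).1 hfar.2.1
  obtain ⟨r, hr, hCr⟩ := (infDist_lt_iff hL).1 hfar.2.2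
  have hnear := not_near_gaussianInt_of_right_triangle (t := t)
    (a := orthonormalBasisOneI.repr.symm (f A)) (b := orthonormalBasisOneI.repr.symm (f B))
    (c := orthonormalBasisOneI.repr.symm (f C))
    (GaussianInt.orthonormalBasisOneI_repr_symm_mem_range hp)
    (GaussianInt.orthonormalBasisOneI_repr_symm_mem_range hq)
    (GaussianInt.orthonormalBasisOneI_repr_symm_mem_range hr)
  simp only [LinearIsometryEquiv.dist_map] at hnear
  exact hnear (hAB.trans hdAB) (hAC.trans hdAC) (by rw [hAB, hAC, hBC, hdBC]) ⟨hAp, hBq, hCr⟩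
end

section
/- Let V = (z₁,…,z_r) ∈ ℂ^r be such that the 2r real numbers Re(z₁),…,Re(z_r), Im(z₁),…,Im(z_r) are linearly independent over ℚ. Then for every ε > 0 there is L > 0 such that for every W = (w₁,…,w_r) ∈ ℂ^r there exists s ∈ [0, L] with dist(w_k + s·z_k, ℤ[i]) < ε for all k. -/
/-! The orbit `s ↦ (s vᵢ mod 1)ᵢ` of the linear flow on the torus `(ℝ/ℤ)^d` is dense as soon
as the `vᵢ` are linearly independent over `ℚ` (Kronecker). Indeed, the distance `f` to the orbit
is invariant under translation by the orbit, so its Fourier coefficient at `n` vanishes unless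
`exp (2πi s ∑ nᵢvᵢ) = 1` for all `s`, i.e. unless `∑ nᵢvᵢ = 0`; independence leaves only `n = 0`,
so `f` is constant, hence zero. Compactness of the torus then bounds, uniformly in the starting
point, the time the flow needs to enter a given open set. Applied with `v = (Re z, Im z)` and the
`ε/2`-ball around `0`, this gives the theorem. -/
open Complex Metric

def gaussianInts : Set ℂ := {z | ∃ a b : ℤ, z = (a : ℂ) + (b : ℂ) * Complex.I}

namespace UnitAddTorus

variable {d : Type*}

def linearFlow (v : d → ℝ) : ℝ →+ UnitAddTorus d where
  toFun s i := ((s * v i : ℝ) : UnitAddCircle)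
  map_zero' := by ext; simp
  map_add' s t := by ext; simp [add_mul]

variable [Fintype d]

lemma mFourier_add_apply (n : d → ℤ) (x y : UnitAddTorus d) :
    mFourier n (x + y) = mFourier n x * mFourier n y := by
  simp [mFourier, fourier_apply, smul_add, AddCircle.toCircle_add, Finset.prod_mul_distrib]

lemma mFourier_linearFlow (v : d → ℝ) (n : d → ℤ) (s : ℝ) :
    mFourier n (linearFlow v s) = Complex.exp (2 * Real.pi * I * (s * ∑ i, n i * v i)) := by
  simp only [mFourier, linearFlow, ContinuousMap.coe_mk, AddMonoidHom.coe_mk, ZeroHom.coe_mk,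
    fourier_coe_apply]
  rw [← Complex.exp_sum]
  push_cast
  simp only [Finset.mul_sum]
  exact congrArg Complex.exp (Finset.sum_congr rfl fun i _ => by ring)

lemma mFourierCoeff_eq_zero_of_add_periodic {E : Type*} [NormedAddCommGroup E] [NormedSpace ℂ E]
    {f : UnitAddTorus d → E} {k : UnitAddTorus d} (hf : ∀ x, f (x + k) = f x) {n : d → ℤ}
    (hn : mFourier n k ≠ 1) : mFourierCoeff f n = 0 := by
  -- `mFourierCoeff` integrates against `haarAddCircle`, which is not definitionally `volume`.
  let μ : MeasureTheory.Measure (UnitAddTorus d) := .pi fun _ => AddCircle.haarAddCircle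
  have h : mFourierCoeff f n = mFourier (-n) k • mFourierCoeff f n := by
    calc mFourierCoeff f n = ∫ t, mFourier (-n) t • f t ∂μ := rfl
    _ = ∫ t, mFourier (-n) (t + k) • f (t + k) ∂μ :=
          (MeasureTheory.integral_add_right_eq_self (fun t => mFourier (-n) t • f t) k).symm
    _ = ∫ t, mFourier (-n) k • (mFourier (-n) t • f t) ∂μ := by
          simp only [mFourier_add_apply, hf, mul_smul, mul_comm]
    _ = _ := by rw [MeasureTheory.integral_smul]; rfl
  have hn' : mFourier (-n) k ≠ 1 := by
    rwa [mFourier_neg, Ne, map_eq_one_iff _ (starRingEnd ℂ).injective]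
  have h' : (1 - mFourier (-n) k) • mFourierCoeff f n = 0 := by
    rw [sub_smul, one_smul, ← h, sub_self]
  exact (smul_eq_zero.1 h').resolve_left (sub_ne_zero.2 hn'.symm)

lemma apply_eq_mFourierCoeff_zero (f : C(UnitAddTorus d, ℂ))
    (hf : ∀ n ≠ 0, mFourierCoeff f n = 0) (x : UnitAddTorus d) : f x = mFourierCoeff f 0 := by
  have hsum := hasSum_single (f := fun n => mFourierCoeff f n • mFourier n x) 0
    fun n hn => by rw [hf n hn, zero_smul]
  rw [mFourier_zero, ContinuousMap.one_apply, smul_eq_mul, mul_one] at hsum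
  exact (hasSum_mFourier_series_apply_of_summable (hasSum_single 0 hf).summable x).unique hsum

theorem denseRange_linearFlow {v : d → ℝ} (hv : LinearIndependent ℚ v) :
    DenseRange (linearFlow v) := by
  have hrel : ∀ n : d → ℤ, n ≠ 0 → ∑ i, (n i : ℝ) * v i ≠ 0 := by
    intro n hn hsum
    refine hn (funext (Fintype.linearIndependent_iff.1 (hv.restrict_scalars' ℤ) n ?_))
    simpa only [zsmul_eq_mul] using hsum
  let S := (linearFlow v).range
  let f : C(UnitAddTorus d, ℂ) :=
    ⟨fun x => (‖(x : UnitAddTorus d ⧸ S)‖ : ℂ), by fun_prop⟩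
  have hper : ∀ s x, f (x + linearFlow v s) = f x := fun s x => by
    simp [f, (QuotientAddGroup.eq_zero_iff _).2 (AddMonoidHom.mem_range.2 ⟨s, rfl⟩)]
  have hcoeff : ∀ n ≠ 0, mFourierCoeff f n = 0 := by
    intro n hn
    set c := ∑ i, (n i : ℝ) * v i
    have hc : (2 * c)⁻¹ * c = 1 / 2 := by
      rw [mul_inv, mul_assoc, inv_mul_cancel₀ (hrel n hn), mul_one, one_div]
    refine mFourierCoeff_eq_zero_of_add_periodic (hper (2 * c)⁻¹) ?_
    rw [mFourier_linearFlow, ← ofReal_mul, hc, ofReal_div, ofReal_one, ofReal_ofNat,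
      show 2 * (Real.pi : ℂ) * I * (1 / 2) = Real.pi * I by ring, Complex.exp_pi_mul_I]
    norm_num
  intro x
  rw [← AddMonoidHom.coe_range]
  have hx := apply_eq_mFourierCoeff_zero f hcoeff x
  rw [← apply_eq_mFourierCoeff_zero f hcoeff 0] at hx
  simpa [f, S, QuotientAddGroup.norm_mk_eq_zero_iff_mem_closure] using hx

end UnitAddTorus

theorem exists_Icc_add_mem_of_denseRange {G : Type*} [AddGroup G] [TopologicalSpace G]
    [ContinuousAdd G] [CompactSpace G] {φ : ℝ →+ G} (hφ : DenseRange φ) {U : Set G}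
    (hU : IsOpen U) (hUne : U.Nonempty) :
    ∃ L > (0 : ℝ), ∀ x : G, ∃ s ∈ Set.Icc (0 : ℝ) L, x + φ s ∈ U := by
  have hcover : Set.univ ⊆ ⋃ s : ℝ, (· + φ s) ⁻¹' U := fun x _ => by
    obtain ⟨u, hu⟩ := hUne
    obtain ⟨s, hs⟩ :=
      hφ.exists_mem_open (hU.preimage (continuous_const_add x)) ⟨-x + u, by simpa⟩
    exact Set.mem_iUnion.2 ⟨s, hs⟩
  obtain ⟨t, ht⟩ := isCompact_univ.elim_finite_subcover _
    (fun s => hU.preimage (continuous_add_const (φ s))) hcover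
  set M := ∑ s ∈ t, |s|
  have hM : 0 ≤ M := Finset.sum_nonneg fun s _ => abs_nonneg s
  refine ⟨2 * M + 1, by positivity, fun x => ?_⟩
  -- Shifting `x` by `φ M` first makes every time of the finite cover nonnegative.
  obtain ⟨s, hst, hs⟩ := Set.mem_iUnion₂.1 (ht (Set.mem_univ (x + φ M)))
  have hsM : |s| ≤ M := Finset.single_le_sum (fun s _ => abs_nonneg s) hst
  refine ⟨M + s, ⟨by linarith [neg_abs_le s], by linarith [le_abs_self s]⟩, ?_⟩
  simpa [map_add, add_assoc] using hs

lemma infDist_gaussianInts_le (z : ℂ) :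
    infDist z gaussianInts ≤ ‖(z.re : UnitAddCircle)‖ + ‖(z.im : UnitAddCircle)‖ := by
  rw [UnitAddCircle.norm_eq, UnitAddCircle.norm_eq]
  calc infDist z gaussianInts ≤ dist z (round z.re + round z.im * I) :=
        infDist_le_dist_of_mem ⟨_, _, rfl⟩
  _ ≤ _ := by
        rw [dist_eq]
        refine (norm_le_abs_re_add_abs_im _).trans_eq ?_
        simp

theorem stmt_5 (r : ℕ) (z : Fin r → ℂ)
    (hV : LinearIndependent ℚ (Sum.elim (fun k : Fin r => (z k).re) (fun k : Fin r => (z k).im)))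
    (ε : ℝ) (hε : 0 < ε) :
    ∃ L > (0 : ℝ), ∀ w : Fin r → ℂ, ∃ s ∈ Set.Icc (0 : ℝ) L,
      ∀ k, Metric.infDist (w k + (s : ℂ) * z k) gaussianInts < ε := by
  obtain ⟨L, hL, hcover⟩ :=
    exists_Icc_add_mem_of_denseRange (UnitAddTorus.denseRange_linearFlow hV) isOpen_ball
      (nonempty_ball.2 (half_pos hε))
  refine ⟨L, hL, fun w => ?_⟩
  obtain ⟨s, hs, hball⟩ :=
    hcover fun i => (Sum.elim (fun k => (w k).re) (fun k => (w k).im) i : UnitAddCircle)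
  rw [mem_ball_zero_iff, pi_norm_lt_iff (half_pos hε)] at hball
  refine ⟨s, hs, fun k => ?_⟩
  calc infDist (w k + s * z k) gaussianInts
      ≤ ‖((w k + s * z k).re : UnitAddCircle)‖ + ‖((w k + s * z k).im : UnitAddCircle)‖ :=
        infDist_gaussianInts_le _
  _ < ε / 2 + ε / 2 := by
        refine add_lt_add ?_ ?_
        · simpa [UnitAddTorus.linearFlow] using hball (.inl k)
        · simpa [UnitAddTorus.linearFlow] using hball (.inr k)
  _ = ε := add_halves ε
end

section
/- Let V = (z₁,…,z_r) ∈ ℂ^r with Re(z₁),…,Re(z_r), Im(z₁),…,Im(z_r) linearly independent over ℚ. Then for every ε > 0 there exists T > 0 such that for all t > T there is θ on the unit circle with dist(θ·t·z_k, ℤ[i]) < ε for all k. -/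
open Complex Metric

/-!
The heart of the matter is a uniform Kronecker theorem: if `v₁, …, vₙ` are linearly independent
over `ℤ`, there is an `S` such that for every `u` some `s ∈ [-S, S]` puts all `s vᵢ - uᵢ` within
`ε` of integers. With `e(x) = exp(2πix)`, `K(θ) = |∑_{k<N} e(kθ)|²` and
`g(s) = ∏ᵢ K(s vᵢ - uᵢ)`, both `g` and `g²` expand into finite sums of `e(λ s)` whose frequencies
`λ` are integer combinations of the `vᵢ`, hence vanish only for the constant terms. Over `[-S, S]`
the means of `g` and `g²` are therefore, uniformly in `u`, close to the numbers of constant terms,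
`Nⁿ` and at least `(N³/8)ⁿ`. As `∫ g² ≤ max g · ∫ g`, some `s` has `g(s) ≳ (N²/8)ⁿ`; since each
factor is at most `N²`, every `K(s vᵢ - uᵢ) ≳ N²/8ⁿ`, while `K(θ) ≤ 1/(4 dist(θ, ℤ)²)`.

For the theorem take `v = (Im zₖ, Re zₖ)` and `u = (t Re zₖ, -t Im zₖ)`: rotating `t zₖ` by the
angle `s/t` gives `t zₖ + i s zₖ` up to `O(s²/t)`, and both coordinates of `t zₖ + i s zₖ` are then
close to integers.
-/

open Finset Real FourierTransform ComplexConjugate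

noncomputable section

lemma fourierChar_intCast (m : ℤ) : 𝐞 m = 1 := by
  rw [← Circle.coe_eq_one, fourierChar_apply]
  simpa [mul_comm, mul_assoc, mul_left_comm] using Complex.exp_int_mul_two_pi_mul_I m

lemma fourierChar_sum {α : Type*} (s : Finset α) (f : α → ℝ) :
    (𝐞 (∑ i ∈ s, f i) : ℂ) = ∏ i ∈ s, (𝐞 (f i) : ℂ) := by
  classical
  induction s using Finset.induction_on with
  | empty => simp
  | insert a s ha ih => rw [sum_insert ha, prod_insert ha, AddChar.map_add_eq_mul,
      Circle.coe_mul, ih]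

lemma norm_fourierChar_sub_one (θ : ℝ) : ‖(𝐞 θ : ℂ) - 1‖ = 2 * |Real.sin (π * θ)| := by
  rw [fourierChar_apply, mul_comm, norm_exp_I_mul_ofReal_sub_one, norm_mul, Real.norm_eq_abs,
    show 2 * π * θ / 2 = π * θ by ring]
  norm_num

lemma four_mul_abs_sub_round_le_norm_fourierChar_sub_one (θ : ℝ) :
    4 * |θ - round θ| ≤ ‖(𝐞 θ : ℂ) - 1‖ := by
  have hθ : 𝐞 θ = 𝐞 (θ - round θ) := by
    rw [AddChar.map_sub_eq_div, fourierChar_intCast, div_one]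
  have hπ : |π * (θ - round θ)| ≤ π / 2 := by
    rw [abs_mul, abs_of_pos pi_pos]
    nlinarith [abs_sub_round θ, pi_pos]
  rw [hθ, norm_fourierChar_sub_one]
  have := mul_abs_le_abs_sin hπ
  rw [abs_mul, abs_of_pos pi_pos, ← mul_assoc, div_mul_cancel₀ _ pi_ne_zero] at this
  linarith

lemma norm_integral_fourierChar_mul_le {a : ℝ} (ha : a ≠ 0) (x y : ℝ) :
    ‖∫ s in x..y, (𝐞 (a * s) : ℂ)‖ ≤ 1 / (π * |a|) := by
  have hc : 2 * π * a * I ≠ 0 := by simp [ha, pi_ne_zero]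
  have he : ∀ s : ℝ, (𝐞 (a * s) : ℂ) = Complex.exp (2 * π * a * I * s) := fun s => by
    rw [fourierChar_apply]; push_cast; ring_nf
  simp_rw [he, integral_exp_mul_complex hc, norm_div]
  have hnum : ‖Complex.exp (2 * π * a * I * y) - Complex.exp (2 * π * a * I * x)‖ ≤ 2 := by
    refine (norm_sub_le _ _).trans ?_
    rw [← he, ← he, Circle.norm_coe, Circle.norm_coe]; norm_num
  have hden : ‖2 * π * a * I‖ = 2 * (π * |a|) := by
    simp only [Complex.norm_mul, Complex.norm_ofNat, norm_real, Real.norm_eq_abs,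
      abs_of_pos pi_pos, norm_I, mul_one]
    ring
  rw [hden, div_le_div_iff₀ (by positivity) (by positivity)]
  nlinarith [mul_le_mul_of_nonneg_right hnum (by positivity : (0:ℝ) ≤ π * |a|)]

variable {β γ : Type*}

lemma norm_integral_sum_fourierChar_sub_le (P : Finset γ) (freq : γ → ℝ) (c : γ → ℂ)
    (hc : ∀ p, ‖c p‖ ≤ 1) (x y : ℝ) :
    ‖(∫ s in x..y, ∑ p ∈ P, c p * 𝐞 (freq p * s)) - (y - x) * ∑ p ∈ P with freq p = 0, c p‖
      ≤ ∑ p ∈ P with freq p ≠ 0, 1 / (π * |freq p|) := by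
  have hint : ∀ p ∈ P,
      IntervalIntegrable (fun s => c p * 𝐞 (freq p * s)) MeasureTheory.volume x y :=
    fun p _ => by apply Continuous.intervalIntegrable; fun_prop
  rw [intervalIntegral.integral_finsetSum hint, ← sum_filter_add_sum_filter_not P (freq · = 0),
    mul_sum]
  have hzero : ∀ p ∈ {p ∈ P | freq p = 0}, ∫ s in x..y, c p * 𝐞 (freq p * s) = (y - x) * c p := by
    intro p hp
    simp [(mem_filter.mp hp).2, mul_comm]
  rw [sum_congr rfl hzero, add_sub_cancel_left]
  refine (norm_sum_le _ _).trans (sum_le_sum fun p hp => ?_)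
  rw [intervalIntegral.integral_const_mul, norm_mul]
  exact (mul_le_of_le_one_left (norm_nonneg _) (hc p)).trans
    (norm_integral_fourierChar_mul_le (mem_filter.mp hp).2 x y)

def trigPoly (A : Finset β) (w : β → ℤ) (θ : ℝ) : ℂ := ∑ t ∈ A, 𝐞 (w t * θ)

lemma trigPoly_mul (A : Finset β) (B : Finset γ) (w : β → ℤ) (w' : γ → ℤ) (θ : ℝ) :
    trigPoly A w θ * trigPoly B w' θ = trigPoly (A ×ˢ B) (fun t => w t.1 + w' t.2) θ := by
  simp only [trigPoly, sum_mul_sum, sum_product, Int.cast_add, add_mul,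
    AddChar.map_add_eq_mul, Circle.coe_mul]

lemma normSq_trigPoly (A : Finset β) (w : β → ℤ) (θ : ℝ) :
    (normSq (trigPoly A w θ) : ℂ) = trigPoly (A ×ˢ A) (fun t => w t.1 - w t.2) θ := by
  have hconj : conj (trigPoly A w θ) = trigPoly A (fun t => -w t) θ := by
    simp [trigPoly, neg_mul]
  rw [← mul_conj, hconj, trigPoly_mul]
  simp only [sub_eq_add_neg]

lemma norm_trigPoly_le (A : Finset β) (w : β → ℤ) (θ : ℝ) : ‖trigPoly A w θ‖ ≤ #A :=
  (norm_sum_le _ _).trans (by simp [Circle.norm_coe])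

lemma continuous_trigPoly (A : Finset β) (w : β → ℤ) : Continuous (trigPoly A w) := by
  unfold trigPoly; fun_prop

variable {ι : Type*} [Fintype ι]

lemma prod_trigPoly_eq_sum [DecidableEq ι] (A : Finset β) (w : β → ℤ) (v u : ι → ℝ) (s : ℝ) :
    ∏ i, trigPoly A w (s * v i - u i) = ∑ p ∈ Fintype.piFinset (fun _ : ι => A),
      (𝐞 (-∑ i, w (p i) * u i) : ℂ) * 𝐞 ((∑ i, w (p i) * v i) * s) := by
  simp only [trigPoly, prod_univ_sum, ← fourierChar_sum, ← Circle.coe_mul,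
    ← AddChar.map_add_eq_mul]
  refine sum_congr rfl fun p _ => ?_
  congr 2
  simp only [sum_mul, ← sum_neg_distrib, ← sum_add_distrib]
  exact sum_congr rfl fun i _ => by ring

lemma exists_forall_norm_integral_prod_trigPoly_sub_le {v : ι → ℝ} (hv : LinearIndependent ℤ v)
    (A : Finset β) (w : β → ℤ) : ∃ B, ∀ (u : ι → ℝ) (S : ℝ),
      ‖(∫ s in -S..S, ∏ i, trigPoly A w (s * v i - u i))
        - 2 * S * (#{t ∈ A | w t = 0} ^ Fintype.card ι : ℕ)‖ ≤ B := by
  classical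
  set P := Fintype.piFinset (fun _ : ι => A)
  let freq (p : ι → β) : ℝ := ∑ i, w (p i) * v i
  have hfreq : ∀ p, freq p = 0 ↔ ∀ i, w (p i) = 0 := fun p =>
    ⟨fun h => Fintype.linearIndependent_iff.mp hv (fun i => w (p i)) (by simpa [zsmul_eq_mul]),
      fun h => by simp [freq, h]⟩
  refine ⟨∑ p ∈ P with freq p ≠ 0, 1 / (π * |freq p|), fun u S => ?_⟩
  have hconst : ∑ p ∈ P with freq p = 0, (𝐞 (-∑ i, w (p i) * u i) : ℂ)
      = (#{t ∈ A | w t = 0} ^ Fintype.card ι : ℕ) := by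
    have hfilter : {p ∈ P | freq p = 0} = Fintype.piFinset (fun _ : ι => {t ∈ A | w t = 0}) := by
      ext p; simp [P, hfreq, forall_and]
    rw [hfilter, sum_congr rfl (g := fun _ => 1) fun p hp => ?_]
    · simp
    · simp [(mem_filter.mp (Fintype.mem_piFinset.mp hp _)).2]
  have hmain := norm_integral_sum_fourierChar_sub_le P freq (fun p => 𝐞 (-∑ i, w (p i) * u i))
    (fun p => (Circle.norm_coe _).le) (-S) S
  rw [hconst, show (S : ℂ) - ((-S : ℝ) : ℂ) = 2 * S by push_cast; ring] at hmain
  simpa only [prod_trigPoly_eq_sum] using hmain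

def expSum (N : ℕ) : ℝ → ℂ := trigPoly (range N) (fun k => k)

lemma norm_expSum_mul_le (N : ℕ) (θ : ℝ) : ‖expSum N θ‖ * (2 * |θ - round θ|) ≤ 1 := by
  have hgeom : expSum N θ * (𝐞 θ - 1) = (𝐞 θ : ℂ) ^ N - 1 := by
    rw [← geom_sum_mul]
    simp only [expSum, trigPoly, Int.cast_natCast, ← nsmul_eq_mul, AddChar.map_nsmul_eq_pow,
      Circle.coe_pow]
  have hnum : ‖(𝐞 θ : ℂ) ^ N - 1‖ ≤ 2 := by
    refine (norm_sub_le _ _).trans ?_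
    rw [norm_pow, Circle.norm_coe]; norm_num
  calc ‖expSum N θ‖ * (2 * |θ - round θ|) ≤ ‖expSum N θ‖ * (‖(𝐞 θ : ℂ) - 1‖ / 2) := by
        gcongr; linarith [four_mul_abs_sub_round_le_norm_fourierChar_sub_one θ]
    _ = ‖(𝐞 θ : ℂ) ^ N - 1‖ / 2 := by rw [← hgeom, norm_mul]; ring
    _ ≤ 1 := by linarith

lemma normSq_expSum_le (N : ℕ) (θ : ℝ) : normSq (expSum N θ) ≤ (N : ℝ) ^ 2 := by
  rw [normSq_eq_norm_sq]
  gcongr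
  exact (norm_trigPoly_le (range N) _ θ).trans_eq (by simp)

lemma normSq_expSum (N : ℕ) (θ : ℝ) :
    (normSq (expSum N θ) : ℂ) = trigPoly (range N ×ˢ range N) (fun t => (t.1 : ℤ) - t.2) θ :=
  normSq_trigPoly _ _ _

lemma normSq_expSum_sq (N : ℕ) (θ : ℝ) :
    ((normSq (expSum N θ) ^ 2 : ℝ) : ℂ) = trigPoly ((range N ×ˢ range N) ×ˢ (range N ×ˢ range N))
      (fun t => ((t.1.1 : ℤ) - t.1.2) + ((t.2.1 : ℤ) - t.2.2)) θ := by
  rw [ofReal_pow, sq, normSq_expSum, trigPoly_mul]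

lemma card_filter_sub_eq_zero (N : ℕ) :
    #{t ∈ range N ×ˢ range N | (t.1 : ℤ) - t.2 = 0} = N := by
  simpa [diag_eq_filter, sub_eq_zero] using diag_card (range N)

lemma cube_le_card_filter_sub_add_sub_eq_zero (M : ℕ) :
    M ^ 3 ≤ #{t ∈ (range (2 * M) ×ˢ range (2 * M)) ×ˢ (range (2 * M) ×ˢ range (2 * M)) |
      ((t.1.1 : ℤ) - t.1.2) + ((t.2.1 : ℤ) - t.2.2) = 0} := by
  have hcube : #(range M ×ˢ range M ×ˢ range M) = M ^ 3 := by
    simp only [card_product, card_range]; ring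
  rw [← hcube]
  refine card_le_card_of_injOn (fun x => ((x.2.1 + x.1, x.2.1), (x.2.2, x.2.2 + x.1)))
    (fun x hx => ?_) (fun x _ y _ hxy => ?_)
  · simp only [coe_product, Set.mem_prod, coe_range, Set.mem_Iio] at hx
    simp only [coe_filter, mem_product, mem_range, Set.mem_ofPred_eq]
    refine ⟨⟨⟨by omega, by omega⟩, by omega, by omega⟩, by push_cast; ring⟩
  · simp only [Prod.mk.injEq] at hxy
    ext <;> omega

lemma exists_lt_of_mul_integral_lt_integral_sq {g : ℝ → ℝ} (hg : Continuous g)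
    (hg0 : ∀ s, 0 ≤ g s) {x y c : ℝ} (hxy : x ≤ y)
    (h : c * ∫ s in x..y, g s < ∫ s in x..y, g s ^ 2) : ∃ s ∈ Set.Icc x y, c < g s := by
  by_contra! hle
  refine h.not_ge ?_
  rw [← intervalIntegral.integral_const_mul]
  refine intervalIntegral.integral_mono_on hxy ((hg.pow 2).intervalIntegrable _ _)
    ((continuous_const.mul hg).intervalIntegrable _ _) fun s hs => ?_
  rw [sq]
  exact mul_le_mul_of_nonneg_right (hle s hs) (hg0 s)

lemma abs_integral_sub_le_of_ofReal {f : ℝ → ℝ} {F : ℝ → ℂ} {S B : ℝ} {Z : ℕ}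
    (h : ‖(∫ s in -S..S, F s) - 2 * S * Z‖ ≤ B) (hF : ∀ s, (f s : ℂ) = F s) :
    |(∫ s in -S..S, f s) - 2 * S * Z| ≤ B := by
  simp_rw [← hF, intervalIntegral.integral_ofReal] at h
  exact_mod_cast h

lemma prod_mul_le_mul_pow_card {f : ι → ℝ} {C : ℝ} (hf0 : ∀ j, 0 ≤ f j) (hfC : ∀ j, f j ≤ C)
    (i : ι) : (∏ j, f j) * C ≤ f i * C ^ Fintype.card ι := by
  classical
  have hC : 0 ≤ C := (hf0 i).trans (hfC i)
  have hrest : ∏ j ∈ univ.erase i, f j ≤ C ^ (Fintype.card ι - 1) := by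
    rw [← card_univ, ← card_erase_of_mem (mem_univ i), ← prod_const]
    exact prod_le_prod (fun j _ => hf0 j) fun j _ => hfC j
  calc (∏ j, f j) * C = f i * ((∏ j ∈ univ.erase i, f j) * C) := by
        rw [← mul_prod_erase univ f (mem_univ i), mul_assoc]
    _ ≤ f i * (C ^ (Fintype.card ι - 1) * C) := by gcongr; exact hf0 i
    _ = f i * C ^ Fintype.card ι := by
        rw [pow_sub_one_mul (Fintype.card_pos_iff.mpr ⟨i⟩).ne']

lemma exists_forall_integral_prod_normSq_expSum_bounds {v : ι → ℝ} (hv : LinearIndependent ℤ v)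
    (M : ℕ) : ∃ B, 0 ≤ B ∧ ∀ (u : ι → ℝ) (S : ℝ), 0 ≤ S →
      (∫ s in -S..S, ∏ i, normSq (expSum (2 * M) (s * v i - u i)))
          ≤ 2 * S * (2 * M : ℝ) ^ Fintype.card ι + B ∧
        2 * S * ((M : ℝ) ^ 3) ^ Fintype.card ι - B
          ≤ ∫ s in -S..S, (∏ i, normSq (expSum (2 * M) (s * v i - u i))) ^ 2 := by
  set n := Fintype.card ι
  set N := 2 * M
  obtain ⟨B₁, hB₁⟩ := exists_forall_norm_integral_prod_trigPoly_sub_le hv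
    (range N ×ˢ range N) (fun t => (t.1 : ℤ) - t.2)
  obtain ⟨B₂, hB₂⟩ := exists_forall_norm_integral_prod_trigPoly_sub_le hv
    ((range N ×ˢ range N) ×ˢ (range N ×ˢ range N))
    (fun t => ((t.1.1 : ℤ) - t.1.2) + ((t.2.1 : ℤ) - t.2.2))
  have hB₁0 : 0 ≤ B₁ := (norm_nonneg _).trans (hB₁ 0 0)
  have hB₂0 : 0 ≤ B₂ := (norm_nonneg _).trans (hB₂ 0 0)
  refine ⟨B₁ + B₂, by positivity, fun u S hS => ⟨?_, ?_⟩⟩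
  · have := abs_integral_sub_le_of_ofReal
      (f := fun s => ∏ i, normSq (expSum N (s * v i - u i))) (hB₁ u S) fun s => by
        simp only [ofReal_prod, normSq_expSum]
    simp only [card_filter_sub_eq_zero, N] at this
    push_cast at this
    linarith [(abs_le.mp this).2]
  · have := abs_integral_sub_le_of_ofReal
      (f := fun s => (∏ i, normSq (expSum N (s * v i - u i))) ^ 2) (hB₂ u S) fun s => by
        simp only [← prod_pow, ofReal_prod, normSq_expSum_sq]
    have hcount : ((M : ℝ) ^ 3) ^ n ≤ ((#{t ∈ (range N ×ˢ range N) ×ˢ (range N ×ˢ range N) |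
        ((t.1.1 : ℤ) - t.1.2) + ((t.2.1 : ℤ) - t.2.2) = 0} ^ n : ℕ) : ℝ) := by
      rw [Nat.cast_pow]
      gcongr
      exact_mod_cast cube_le_card_filter_sub_add_sub_eq_zero M
    nlinarith [(abs_le.mp this).1, mul_le_mul_of_nonneg_left hcount (by positivity : 0 ≤ 2 * S)]

lemma exists_lt_prod_normSq_expSum {v : ι → ℝ} (hv : LinearIndependent ℤ v) (M : ℕ)
    (hM : 0 < M) : ∃ S, ∀ u : ι → ℝ, ∃ s ∈ Set.Icc (-S) S,
      ((M : ℝ) ^ 3) ^ Fintype.card ι / (2 * (2 * M : ℝ) ^ Fintype.card ι)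
        < ∏ i, normSq (expSum (2 * M) (s * v i - u i)) := by
  obtain ⟨B, hB0, hB⟩ := exists_forall_integral_prod_normSq_expSum_bounds hv M
  set a : ℝ := (2 * M : ℝ) ^ Fintype.card ι
  set b : ℝ := ((M : ℝ) ^ 3) ^ Fintype.card ι
  have hb : 0 < b := by positivity
  set c := b / (2 * a)
  have hca : c * (2 * a) = b := div_mul_cancel₀ b (by positivity)
  -- large enough that `c * (2 * S * a + B) < 2 * S * b - B`
  set S := (c + 1) * B / b + 1
  have hS : S * b = (c + 1) * B + b := by simp only [S]; field_simp
  have hS0 : 0 ≤ S := by positivity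
  refine ⟨S, fun u => ?_⟩
  set g := fun s => ∏ i, normSq (expSum (2 * M) (s * v i - u i))
  obtain ⟨h1, h2⟩ := hB u S hS0
  refine exists_lt_of_mul_integral_lt_integral_sq (g := g)
    (continuous_finsetProd _ fun i _ => continuous_normSq.comp <|
      (continuous_trigPoly _ _).comp <| by fun_prop)
    (fun s => prod_nonneg fun i _ => normSq_nonneg _) (by linarith) ?_
  calc c * ∫ s in -S..S, g s ≤ c * B + S * b := by
        nlinarith [mul_le_mul_of_nonneg_left h1 (by positivity : 0 ≤ c)]
    _ < 2 * S * b - B := by linarith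
    _ ≤ ∫ s in -S..S, g s ^ 2 := h2

lemma lt_normSq_expSum_of_lt_prod {M : ℕ} (hM : 0 < M) {θ : ι → ℝ}
    (h : ((M : ℝ) ^ 3) ^ Fintype.card ι / (2 * (2 * M : ℝ) ^ Fintype.card ι)
      < ∏ j, normSq (expSum (2 * M) (θ j))) (i : ι) :
    2 * (M : ℝ) ^ 2 / 8 ^ Fintype.card ι < normSq (expSum (2 * M) (θ i)) := by
  set n := Fintype.card ι
  set K := normSq (expSum (2 * M) (θ i))
  set X := ((M : ℝ) ^ 3) ^ n
  set N : ℝ := ((2 * M : ℕ) : ℝ)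
  have hprod : (∏ j, normSq (expSum (2 * M) (θ j))) * N ^ 2 ≤ K * (N ^ 2) ^ n :=
    prod_mul_le_mul_pow_card (fun j => normSq_nonneg _) (fun j => normSq_expSum_le _ (θ j)) i
  have hpow : (N ^ 2) ^ n * (2 * M : ℝ) ^ n = 8 ^ n * X := by
    rw [← mul_pow, ← mul_pow]; congr 1; push_cast [N]; ring
  rw [div_lt_iff₀ (by positivity)] at h
  have key : N ^ 2 * X < (2 * (K * 8 ^ n)) * X := calc
    N ^ 2 * X < N ^ 2 * ((∏ j, normSq (expSum (2 * M) (θ j))) * (2 * (2 * M : ℝ) ^ n)) :=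
        mul_lt_mul_of_pos_left h (by positivity)
    _ = 2 * (2 * M : ℝ) ^ n * ((∏ j, normSq (expSum (2 * M) (θ j))) * N ^ 2) := by ring
    _ ≤ 2 * (2 * M : ℝ) ^ n * (K * (N ^ 2) ^ n) := by gcongr
    _ = 2 * K * ((N ^ 2) ^ n * (2 * M : ℝ) ^ n) := by ring
    _ = (2 * (K * 8 ^ n)) * X := by rw [hpow]; ring
  have hN : N ^ 2 < 2 * (K * 8 ^ n) := lt_of_mul_lt_mul_right key (by positivity)
  rw [div_lt_iff₀ (by positivity)]
  push_cast [N] at hN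
  nlinarith

theorem kronecker_uniform {v : ι → ℝ} (hv : LinearIndependent ℤ v) {ε : ℝ} (hε : 0 < ε) :
    ∃ S, ∀ u : ι → ℝ, ∃ s ∈ Set.Icc (-S) S, ∀ i, ∃ m : ℤ, |s * v i - u i - m| < ε := by
  set n := Fintype.card ι
  obtain ⟨M, hM⟩ := exists_nat_gt (8 ^ n / ε)
  have hM0 : 0 < M := by exact_mod_cast (by positivity : (0 : ℝ) < 8 ^ n / ε).trans hM
  have hMε : 8 ^ n < M * ε := (div_lt_iff₀ hε).mp hM
  obtain ⟨S, hS⟩ := exists_lt_prod_normSq_expSum hv M hM0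
  refine ⟨S, fun u => ?_⟩
  obtain ⟨s, hs, hlarge⟩ := hS u
  refine ⟨s, hs, fun i => ⟨round (s * v i - u i), ?_⟩⟩
  by_contra! hfar
  set E := expSum (2 * M) (s * v i - u i)
  have hup : ‖E‖ * (2 * ε) ≤ 1 :=
    (by gcongr : ‖E‖ * (2 * ε) ≤ ‖E‖ * (2 * |_|)).trans (norm_expSum_mul_le _ _)
  have hlow := lt_normSq_expSum_of_lt_prod hM0 hlarge i
  rw [normSq_eq_norm_sq, div_lt_iff₀ (by positivity)] at hlow
  have h8 : (1 : ℝ) ≤ 8 ^ n := one_le_pow₀ (by norm_num)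
  nlinarith [mul_self_le_mul_self (by positivity) hup, mul_self_lt_mul_self (by positivity) hMε]

lemma infDist_gaussianInts_le_s7 (w : ℂ) (a b : ℤ) :
    infDist w gaussianInts ≤ |w.re - a| + |w.im - b| :=
  (infDist_le_dist_of_mem (show (a + b * I : ℂ) ∈ gaussianInts from ⟨a, b, rfl⟩)).trans <| by
    rw [Complex.dist_eq]
    exact (norm_le_abs_re_add_abs_im _).trans_eq (by simp)

lemma norm_exp_mul_sub_le {s t : ℝ} (ht : 0 < t) (hst : |s| ≤ t) (z : ℂ) :
    ‖exp ((s / t : ℝ) * I) * t * z - (t * z + s * I * z)‖ ≤ s ^ 2 * ‖z‖ / t := by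
  have hα : ‖((s / t : ℝ) : ℂ) * I‖ = |s| / t := by simp [abs_of_pos ht]
  have hsplit : exp ((s / t : ℝ) * I) * t * z - (t * z + s * I * z)
      = (exp ((s / t : ℝ) * I) - 1 - (s / t : ℝ) * I) * (t * z) := by
    have ht0 : (t : ℂ) ≠ 0 := by exact_mod_cast ht.ne'
    push_cast; field_simp; ring
  rw [hsplit, norm_mul, norm_mul, norm_real, Real.norm_of_nonneg ht.le]
  calc _ ≤ ‖((s / t : ℝ) : ℂ) * I‖ ^ 2 * (t * ‖z‖) := by
        gcongr
        exact norm_exp_sub_one_sub_id_le (by rw [hα]; exact div_le_one_of_le₀ hst ht.le)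
    _ = s ^ 2 * ‖z‖ / t := by rw [hα, div_pow, sq_abs]; field_simp

lemma infDist_exp_mul_lt {z : ℂ} {s t S C ε : ℝ} (hε : 0 < ε) (hsS : |s| ≤ S) (hzC : ‖z‖ ≤ C)
    (ht : |S| + 2 * S ^ 2 * C / ε < t) {m₁ m₂ : ℤ} (h₁ : |s * z.im - t * z.re - m₁| < ε / 4)
    (h₂ : |s * z.re + t * z.im - m₂| < ε / 4) :
    infDist (exp ((s / t : ℝ) * I) * t * z) gaussianInts < ε := by
  have hC : 0 ≤ 2 * S ^ 2 * C / ε := by have := (norm_nonneg z).trans hzC; positivity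
  have ht0 : 0 < t := by linarith [abs_nonneg S]
  have hrot : s ^ 2 * ‖z‖ / t < ε / 2 := by
    have hsz : s ^ 2 * ‖z‖ ≤ S ^ 2 * C :=
      mul_le_mul (sq_le_sq' (abs_le.mp hsS).1 (abs_le.mp hsS).2) hzC (norm_nonneg _) (sq_nonneg _)
    have htC : 2 * S ^ 2 * C < t * ε := (div_lt_iff₀ hε).mp (by linarith [abs_nonneg S])
    rw [div_lt_iff₀ ht0]
    linarith
  have hlattice : infDist (t * z + s * I * z) gaussianInts < ε / 2 := by
    refine (infDist_gaussianInts_le_s7 _ (-m₁) m₂).trans_lt ?_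
    have hre : (t * z + s * I * z).re - (-m₁ : ℤ) = -(s * z.im - t * z.re - m₁) := by
      simp only [add_re, mul_re, mul_im, ofReal_re, ofReal_im, I_re, I_im, Int.cast_neg]; ring
    have him : (t * z + s * I * z).im - m₂ = s * z.re + t * z.im - m₂ := by
      simp only [add_im, mul_im, mul_re, ofReal_re, ofReal_im, I_re, I_im]; ring
    rw [hre, him, abs_neg]
    linarith
  calc infDist (exp ((s / t : ℝ) * I) * t * z) gaussianInts
      ≤ infDist (t * z + s * I * z) gaussianInts
        + ‖exp ((s / t : ℝ) * I) * t * z - (t * z + s * I * z)‖ := by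
        rw [← Complex.dist_eq]; exact infDist_le_infDist_add_dist
    _ < ε / 2 + ε / 2 := by
        linarith [norm_exp_mul_sub_le ht0 (by linarith [le_abs_self S] : |s| ≤ t) z]
    _ = ε := add_halves ε

end

theorem stmt_7 (r : ℕ) (z : Fin r → ℂ)
    (hV : LinearIndependent ℚ (Sum.elim (fun k : Fin r => (z k).re) (fun k : Fin r => (z k).im)))
    (ε : ℝ) (hε : 0 < ε) :
    ∃ T > (0 : ℝ), ∀ t : ℝ, t > T → ∃ θ : ℂ, ‖θ‖ = 1 ∧
      ∀ k, Metric.infDist (θ * t * z k) gaussianInts < ε := by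
  have hv : LinearIndependent ℤ (Sum.elim (fun k => (z k).im) (fun k => (z k).re)) := by
    simpa using
      (hV.comp Sum.swap (Function.LeftInverse.injective Sum.swap_swap)).restrict_scalars' ℤ
  obtain ⟨S, hS⟩ := kronecker_uniform hv (ε := ε / 4) (by positivity)
  set C := ∑ k, ‖z k‖
  refine ⟨|S| + 2 * S ^ 2 * C / ε + 1, by positivity, fun t ht => ?_⟩
  obtain ⟨s, hs, hm⟩ := hS (Sum.elim (fun k => t * (z k).re) (fun k => -(t * (z k).im)))
  refine ⟨exp ((s / t : ℝ) * I), norm_exp_ofReal_mul_I _, fun k => ?_⟩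
  obtain ⟨m₁, hm₁⟩ := hm (Sum.inl k)
  obtain ⟨m₂, hm₂⟩ := hm (Sum.inr k)
  simp only [Sum.elim_inl, Sum.elim_inr, sub_neg_eq_add] at hm₁ hm₂
  exact infDist_exp_mul_lt hε (abs_le.mpr hs)
    (single_le_sum (fun j _ => norm_nonneg (z j)) (mem_univ k)) (by linarith) hm₁ hm₂
end

section
/- Let z₁,…,z_r ∈ ℂ be linearly independent over ℚ[i]. Then for all but at most countably many φ ∈ [0, 2π), the 2r complex numbers e^{iφ}z₁,…,e^{iφ}z_r, e^{−iφ}·conj(z₁),…,e^{−iφ}·conj(z_r) are linearly independent over ℚ[i]. -/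
open Complex

noncomputable def QI : Subfield ℂ := Subfield.closure {Complex.I}

/-! If the family is dependent at `φ`, with coefficients `a, b`, then `w = e^{iφ}`
satisfies `w² A + B = 0` for `A = ∑ aₖ zₖ`, `B = ∑ bₖ conj zₖ`. Since `ℚ[i]` is stable
under conjugation, `conj ∘ z` is independent as well, which forces `A ≠ 0`; so `w² = -B / A`
lies in a countable set, because `ℚ[i]` is countable. Finally `φ ↦ e^{iφ}` is injective on
`[0, 2π)`. -/

theorem LinearIndependent.mul_left {K L ι : Type*} [Field K] [Field L] [Algebra K L]
    {f : ι → L} (hf : LinearIndependent K f) {a : L} (ha : a ≠ 0) :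
    LinearIndependent K (fun i => a * f i) :=
  hf.map' (LinearMap.mulLeft K a) (LinearMap.ker_eq_bot.2 (mul_right_injective₀ ha))

theorem LinearIndependent.map_ringHom_of_le_map {L ι : Type*} [Field L] {K : Subfield L}
    (σ : L →+* L) (hK : K ≤ K.map σ) {v : ι → L} (hv : LinearIndependent K v) :
    LinearIndependent K (σ ∘ v) := by
  choose i hiK hσi using fun r : K => Subfield.mem_map.1 (hK r.2)
  refine hv.map_of_injective_injectiveₛ (fun r => ⟨i r, hiK r⟩) σ.toAddMonoidHom
    (fun r s h => Subtype.ext ?_) σ.injective fun r m => ?_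
  · rw [← hσi r, ← hσi s]
    exact congrArg (fun x : K => σ x) h
  · change σ (i r * m) = r * σ m
    rw [map_mul, hσi]

section SumElim

variable {K L ι : Type*} [Field K] [Field L] [Algebra K L] [Fintype ι] {u v : ι → L}

theorem mem_range_neg_div_of_not_linearIndependent_sumElim (hu : LinearIndependent K u)
    (hv : LinearIndependent K v) {c : L}
    (hc : ¬ LinearIndependent K (Sum.elim (fun i => c * u i) v)) :
    c ∈ Set.range fun g : ι ⊕ ι → K =>
      -(∑ i, g (.inr i) • v i) / ∑ i, g (.inl i) • u i := by
  obtain ⟨g, hg, i₀, hi₀⟩ := Fintype.not_linearIndependent_iff.1 hc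
  set A := ∑ i, g (.inl i) • u i
  set B := ∑ i, g (.inr i) • v i
  have hcAB : c * A + B = 0 := by
    simpa [A, B, Fintype.sum_sum_type, mul_smul_comm, Finset.mul_sum] using hg
  have hA : A ≠ 0 := by
    intro hA
    have hl := Fintype.linearIndependent_iff.1 hu _ hA
    have hr := Fintype.linearIndependent_iff.1 hv _ (by simpa [hA] using hcAB)
    cases i₀ with
    | inl i => exact hi₀ (hl i)
    | inr i => exact hi₀ (hr i)
  exact ⟨g, by rw [div_eq_iff hA]; linear_combination -hcAB⟩

theorem countable_setOf_not_linearIndependent_sumElim_mul [Countable K]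
    (hu : LinearIndependent K u) (hv : LinearIndependent K v) :
    {c : L | ¬ LinearIndependent K (Sum.elim (fun i => c * u i) v)}.Countable :=
  (Set.countable_range _).mono fun _ hc =>
    mem_range_neg_div_of_not_linearIndependent_sumElim hu hv hc

theorem countable_setOf_not_linearIndependent_sumElim_mul_inv [Countable K]
    (hu : LinearIndependent K u) (hv : LinearIndependent K v) :
    {w : L | ¬ LinearIndependent K
      (Sum.elim (fun i => w * u i) (fun i => w⁻¹ * v i))}.Countable := by
  have hsqrt : ∀ c : L, {w : L | w ^ 2 = c}.Finite := fun c =>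
    (Polynomial.nthRoots 2 c).finite_toSet.subset fun w hw => (Polynomial.mem_nthRoots two_pos).2 hw
  refine (((countable_setOf_not_linearIndependent_sumElim_mul hu hv).biUnion
    fun c _ => (hsqrt c).countable).insert 0).mono fun w hw => ?_
  rcases eq_or_ne w 0 with rfl | hw0
  · exact Or.inl rfl
  refine Or.inr (Set.mem_biUnion (x := w ^ 2) (fun hli => hw ?_) rfl)
  convert hli.mul_left (inv_ne_zero hw0) using 1
  ext (i | i)
  · simp only [Sum.elim_inl]
    field_simp
  · simp only [Sum.elim_inr]

end SumElim

theorem Complex.injOn_exp_I_mul_Ico {a b : ℝ} (h : b - a ≤ 2 * Real.pi) :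
    Set.InjOn (fun φ : ℝ => exp (I * φ)) (Set.Ico a b) := fun φ hφ ψ hψ hexp =>
  Circle.exp_injOn_Ico h hφ hψ <| Subtype.ext <| by simpa [Circle.coe_exp, mul_comm] using hexp

theorem QI_le_map_conj : QI ≤ QI.map (starRingEnd ℂ) := by
  rw [QI, RingHom.map_field_closure, Set.image_singleton, conj_I, Subfield.closure_le,
    Set.singleton_subset_iff]
  simpa using Subfield.neg_mem _ (Subfield.subset_closure (Set.mem_singleton (-I)))

instance : Countable QI := by
  rw [← Cardinal.mk_le_aleph0_iff]
  exact (Subfield.cardinalMk_closure_le_max _).trans (by simp)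

theorem stmt_9 (r : ℕ) (z : Fin r → ℂ) (hz : LinearIndependent QI z) :
    Set.Countable {φ ∈ Set.Ico (0 : ℝ) (2 * Real.pi) |
      ¬ LinearIndependent QI
        (Sum.elim (fun k : Fin r => Complex.exp (Complex.I * φ) * z k)
                  (fun k : Fin r => Complex.exp (-(Complex.I * φ)) * (starRingEnd ℂ) (z k)))} := by
  have hbad := countable_setOf_not_linearIndependent_sumElim_mul_inv hz
    (hz.map_ringHom_of_le_map (starRingEnd ℂ) QI_le_map_conj)
  refine Set.MapsTo.countable_of_injOn (fun φ hφ => ?_)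
    ((injOn_exp_I_mul_Ico (by simp)).mono (Set.sep_subset _ _)) hbad
  simpa [Complex.exp_neg] using hφ.2
end

section
/- Let z₁,…,z_r ∈ ℂ be linearly independent over ℚ[i]. Then for all but at most countably many φ ∈ [0, 2π), the tuple (e^{iφ}z₁,…,e^{iφ}z_r) is typical, i.e., the 2r real numbers Re(e^{iφ}z_k), Im(e^{iφ}z_k) (k = 1,…,r) are linearly independent over ℚ. -/
/-! A rational relation `∑ aₖ re (w zₖ) + bₖ im (w zₖ) = 0` with `w = e^{iφ}` says `re (w S) = 0`
for the `ℚ[i]`-combination `S = ∑ (aₖ - bₖ i) zₖ`, which is nonzero by the independence of the `zₖ`.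
For fixed `S ≠ 0` this forces `cos (φ + arg S) = 0`, which holds for countably many `φ`, and there
are only countably many rational coefficient vectors. -/

open Complex

lemma re_exp_I_mul_mul (φ : ℝ) (S : ℂ) :
    (exp (I * φ) * S).re = ‖S‖ * Real.cos (φ + arg S) := by
  conv_lhs => rw [← norm_mul_exp_arg_mul_I S]
  rw [mul_left_comm, mul_comm I, ← exp_add, ← add_mul, ← ofReal_add, re_ofReal_mul,
    exp_ofReal_mul_I_re]

lemma countable_setOf_re_exp_I_mul_mul_eq_zero {S : ℂ} (hS : S ≠ 0) :
    {φ : ℝ | (exp (I * φ) * S).re = 0}.Countable := by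
  refine (Set.countable_range fun k : ℤ => (2 * k + 1) * Real.pi / 2 - arg S).mono ?_
  intro φ hφ
  have hcos : Real.cos (φ + arg S) = 0 := by
    simpa [hS] using (re_exp_I_mul_mul φ S).symm.trans hφ
  obtain ⟨k, hk⟩ := Real.cos_eq_zero_iff.mp hcos
  exact ⟨k, by linarith⟩

lemma I_mem_QI : I ∈ QI := Subfield.subset_closure rfl

section GaussianCombination

variable {ι : Type*} [Fintype ι]

noncomputable def gaussianRatComb (q : ι ⊕ ι → ℚ) (v : ι → ℂ) : ℂ :=
  ∑ k, ((q (.inl k) : ℂ) - q (.inr k) * I) * v k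

lemma gaussianRatComb_const_mul (q : ι ⊕ ι → ℚ) (w : ℂ) (v : ι → ℂ) :
    gaussianRatComb q (fun k => w * v k) = w * gaussianRatComb q v := by
  simp only [gaussianRatComb, Finset.mul_sum]
  exact Finset.sum_congr rfl fun _ _ => by ring

lemma re_gaussianRatComb (q : ι ⊕ ι → ℚ) (v : ι → ℂ) :
    (gaussianRatComb q v).re = ∑ k, (q (.inl k) * (v k).re + q (.inr k) * (v k).im) := by
  simp only [gaussianRatComb, re_sum]
  exact Finset.sum_congr rfl fun _ _ => by simp [mul_re]

lemma exists_re_gaussianRatComb_eq_zero {v : ι → ℂ}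
    (h : ¬ LinearIndependent ℚ (Sum.elim (fun k => (v k).re) (fun k => (v k).im))) :
    ∃ q : ι ⊕ ι → ℚ, q ≠ 0 ∧ (gaussianRatComb q v).re = 0 := by
  obtain ⟨q, hsum, i, hi⟩ := Fintype.not_linearIndependent_iff.mp h
  refine ⟨q, fun hq => hi (by simp [hq]), ?_⟩
  rw [Fintype.sum_sum_type] at hsum
  simpa [re_gaussianRatComb, Finset.sum_add_distrib, Rat.smul_def] using hsum

lemma gaussianRatComb_ne_zero {z : ι → ℂ} (hz : LinearIndependent QI z) {q : ι ⊕ ι → ℚ}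
    (hq : q ≠ 0) : gaussianRatComb q z ≠ 0 := by
  intro h0
  have hcoeff := Fintype.linearIndependent_iff.mp hz
    (fun k => (q (.inl k) : QI) - q (.inr k) * ⟨I, I_mem_QI⟩) (by simpa [gaussianRatComb, Subfield.smul_def] using h0)
  refine hq (funext fun i => ?_)
  rcases i with k | k
  · simpa using congrArg (fun x : QI => (x : ℂ).re) (hcoeff k)
  · simpa using congrArg (fun x : QI => (x : ℂ).im) (hcoeff k)

end GaussianCombination

theorem stmt_11 (r : ℕ) (z : Fin r → ℂ) (hz : LinearIndependent QI z) :
    Set.Countable {φ ∈ Set.Ico (0 : ℝ) (2 * Real.pi) |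
      ¬ LinearIndependent ℚ
        (Sum.elim (fun k : Fin r => (Complex.exp (Complex.I * φ) * z k).re)
                  (fun k : Fin r => (Complex.exp (Complex.I * φ) * z k).im))} := by
  refine Set.Countable.mono (s₂ := ⋃ (q : Fin r ⊕ Fin r → ℚ) (_ : q ≠ 0),
      {φ : ℝ | (exp (I * φ) * gaussianRatComb q z).re = 0}) ?_ ?_
  · rintro φ ⟨-, hφ⟩
    obtain ⟨q, hq, hre⟩ := exists_re_gaussianRatComb_eq_zero hφ
    rw [gaussianRatComb_const_mul] at hre
    exact Set.mem_iUnion₂.mpr ⟨q, hq, hre⟩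
  · exact Set.countable_iUnion fun q => Set.countable_iUnion fun hq =>
      countable_setOf_re_exp_I_mul_mul_eq_zero (gaussianRatComb_ne_zero hz hq)
end

section
/- Suppose every finite m-flat metric space X satisfies lim_{t→∞} τ_m(tX) = 0 and every finite n-flat metric space satisfies lim_{t→∞} τ_n(tX) = 0. Then every finite (m+n)-flat metric space X satisfies lim_{t→∞} τ_{m+n}(tX) = 0. -/
open Metric

/-- `X` is `k`-flat: it embeds isometrically into `ℝ^k`. -/
def IsFlat (k : ℕ) (X : Type) [MetricSpace X] : Prop :=
  ∃ f : X → EuclideanSpace ℝ (Fin k), Isometry f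

/-- `lim_{t → ∞} τ_k (tX) = 0`: for every `ε > 0`, for all large `t` there is an
isometric embedding of the scaled space `tX` into `ℝ^k` taking all points
`ε`-close to the lattice `ℤ^k`. -/
def TauTendstoZero (k : ℕ) (X : Type) [MetricSpace X] : Prop :=
  ∀ ε > (0 : ℝ), ∃ T : ℝ, ∀ t > T, ∃ f : X → EuclideanSpace ℝ (Fin k),
    (∀ x y : X, dist (f x) (f y) = t * dist x y) ∧
    (∀ x : X, Metric.infDist (f x) (intLattice k) < ε)

/-!
Split `ℝ^(m+n) = ℝ^m × ℝ^n` orthogonally. The two coordinate projections of a finite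
`(m+n)`-flat space are finite `m`- and `n`-flat spaces; scaled embeddings of them near `ℤ^m`
and `ℤ^n` concatenate to a scaled embedding near `ℤ^(m+n)`, because squared distances add
under concatenation (Pythagoras) and `ℤ^(m+n) = ℤ^m × ℤ^n`.
-/

namespace EuclideanSpace

variable {m n : ℕ}

def append (a : EuclideanSpace ℝ (Fin m)) (b : EuclideanSpace ℝ (Fin n)) :
    EuclideanSpace ℝ (Fin (m + n)) :=
  WithLp.toLp 2 (Fin.addCases (motive := fun _ => ℝ) a b)

def leftBlock (u : EuclideanSpace ℝ (Fin (m + n))) : EuclideanSpace ℝ (Fin m) :=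
  WithLp.toLp 2 fun i => u (Fin.castAdd n i)

def rightBlock (u : EuclideanSpace ℝ (Fin (m + n))) : EuclideanSpace ℝ (Fin n) :=
  WithLp.toLp 2 fun j => u (Fin.natAdd m j)

theorem append_leftBlock_rightBlock (u : EuclideanSpace ℝ (Fin (m + n))) :
    append (leftBlock u) (rightBlock u) = u := by
  ext i
  refine Fin.addCases (fun i => ?_) (fun j => ?_) i <;> simp [append, leftBlock, rightBlock]

theorem dist_append_sq (a a' : EuclideanSpace ℝ (Fin m)) (b b' : EuclideanSpace ℝ (Fin n)) :
    dist (append a b) (append a' b') ^ 2 = dist a a' ^ 2 + dist b b' ^ 2 := by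
  simp only [PiLp.dist_sq_eq_of_L2, Fin.sum_univ_add]
  simp [append]

theorem dist_sq_eq_leftBlock_rightBlock (u v : EuclideanSpace ℝ (Fin (m + n))) :
    dist u v ^ 2 = dist (leftBlock u) (leftBlock v) ^ 2 + dist (rightBlock u) (rightBlock v) ^ 2 := by
  rw [← dist_append_sq, append_leftBlock_rightBlock, append_leftBlock_rightBlock]

theorem dist_append_le (a a' : EuclideanSpace ℝ (Fin m)) (b b' : EuclideanSpace ℝ (Fin n)) :
    dist (append a b) (append a' b') ≤ dist a a' + dist b b' := by
  rw [← pow_le_pow_iff_left₀ dist_nonneg (by positivity) two_ne_zero, dist_append_sq]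
  nlinarith [mul_nonneg (dist_nonneg (x := a) (y := a')) (dist_nonneg (x := b) (y := b'))]

theorem dist_append_eq_mul {t : ℝ} (ht : 0 ≤ t) {a a' : EuclideanSpace ℝ (Fin m)}
    {b b' : EuclideanSpace ℝ (Fin n)} {u v : EuclideanSpace ℝ (Fin (m + n))}
    (ha : dist a a' = t * dist (leftBlock u) (leftBlock v))
    (hb : dist b b' = t * dist (rightBlock u) (rightBlock v)) :
    dist (append a b) (append a' b') = t * dist u v := by
  refine (pow_left_inj₀ dist_nonneg (mul_nonneg ht dist_nonneg) two_ne_zero).mp ?_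
  rw [dist_append_sq, ha, hb, mul_pow, mul_pow, mul_pow, dist_sq_eq_leftBlock_rightBlock u v]
  ring

end EuclideanSpace

open EuclideanSpace

theorem intLattice_nonempty (k : ℕ) : (intLattice k).Nonempty :=
  ⟨0, fun _ => ⟨0, by simp⟩⟩

theorem append_mem_intLattice {m n : ℕ} {a : EuclideanSpace ℝ (Fin m)}
    {b : EuclideanSpace ℝ (Fin n)} (ha : a ∈ intLattice m) (hb : b ∈ intLattice n) :
    append a b ∈ intLattice (m + n) := by
  intro i
  refine Fin.addCases (fun i => ?_) (fun j => ?_) i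
  · simpa [append] using ha i
  · simpa [append] using hb j

theorem infDist_append_intLattice_lt {m n : ℕ} {a : EuclideanSpace ℝ (Fin m)}
    {b : EuclideanSpace ℝ (Fin n)} {r s : ℝ} (ha : infDist a (intLattice m) < r)
    (hb : infDist b (intLattice n) < s) :
    infDist (append a b) (intLattice (m + n)) < r + s := by
  obtain ⟨u, hu, hau⟩ := (infDist_lt_iff (intLattice_nonempty m)).mp ha
  obtain ⟨v, hv, hbv⟩ := (infDist_lt_iff (intLattice_nonempty n)).mp hb
  calc infDist (append a b) (intLattice (m + n))
      ≤ dist (append a b) (append u v) := infDist_le_dist_of_mem (append_mem_intLattice hu hv)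
    _ ≤ dist a u + dist b v := dist_append_le a u b v
    _ < r + s := add_lt_add hau hbv

theorem exists_scaled_near_intLattice {k : ℕ}
    (hk : ∀ (X : Type) [MetricSpace X] [Fintype X], IsFlat k X → TauTendstoZero k X)
    {X : Type} [Finite X] (g : X → EuclideanSpace ℝ (Fin k)) {ε : ℝ} (hε : 0 < ε) :
    ∃ T : ℝ, ∀ t > T, ∃ φ : X → EuclideanSpace ℝ (Fin k),
      (∀ x y, dist (φ x) (φ y) = t * dist (g x) (g y)) ∧
      ∀ x, infDist (φ x) (intLattice k) < ε := by
  have : Fintype (Set.range g) := (Set.finite_range g).fintype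
  obtain ⟨T, hT⟩ := hk (Set.range g) ⟨Subtype.val, isometry_subtype_coe⟩ ε hε
  refine ⟨T, fun t ht => ?_⟩
  obtain ⟨φ, hφ, hφL⟩ := hT t ht
  exact ⟨φ ∘ Set.rangeFactorization g, fun x y => hφ _ _, fun x => hφL _⟩

theorem stmt_14 (m n : ℕ)
    (hm : ∀ (X : Type) [MetricSpace X] [Fintype X], IsFlat m X → TauTendstoZero m X)
    (hn : ∀ (X : Type) [MetricSpace X] [Fintype X], IsFlat n X → TauTendstoZero n X) :
    ∀ (X : Type) [MetricSpace X] [Fintype X],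
      IsFlat (m + n) X → TauTendstoZero (m + n) X := by
  intro X _ _ ⟨f, hf⟩ ε hε
  obtain ⟨T₁, hT₁⟩ := exists_scaled_near_intLattice hm (leftBlock ∘ f) (half_pos hε)
  obtain ⟨T₂, hT₂⟩ := exists_scaled_near_intLattice hn (rightBlock ∘ f) (half_pos hε)
  refine ⟨max 0 (max T₁ T₂), fun t ht => ?_⟩
  obtain ⟨ht₀, ht₁, ht₂⟩ : 0 < t ∧ T₁ < t ∧ T₂ < t := by simpa only [max_lt_iff] using ht
  obtain ⟨φ, hφ, hφL⟩ := hT₁ t ht₁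
  obtain ⟨ψ, hψ, hψL⟩ := hT₂ t ht₂
  refine ⟨fun x => append (φ x) (ψ x), fun x y => ?_, fun x => ?_⟩
  · rw [← hf.dist_eq]
    exact dist_append_eq_mul ht₀.le (hφ x y) (hψ x y)
  · simpa only [add_halves] using infDist_append_intLattice_lt (hφL x) (hψL x)
end
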